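/- Let m ≤ n be positive integers with m even and n odd. Then γ'ₛ(K_{m,n}) = min{3m, max{2m, n+1}}. -/

import Mathlib

/-!
Let `g` be the `±1` matrix of an SEDF of `K_{m,n}`, with row sums `A i` and column sums `B j`,
so that the condition reads `A i + B j - g i j ≥ 1`. As `n` is odd and `m` even, every
`A i + B j` is odd, which sharpens the condition to `B j ≥ 2 + g i j - A i`. Summed over a row
with `A i = 1` this gives total weight `≥ n + 1`, and summed over a column with `B j = 0` (where
the roles of rows and columns are exchanged) it gives `≥ 2m`. Otherwise either every `A i ≥ 3`
and the total is `≥ 3m`, or some `A i ≤ 1` forces every `B j ≥ 0`; then either every `B j ≥ 2`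
and the total is `≥ 2n`, or some `B j = 0`, and that forces `A i = 1`.

For `m = 2h`, `n = 2n' + 1` the bound is attained with `l = min(h, 3h - n' - 1)` light rows,
equal to `+1` on `n' + 1` fixed columns and `-1` elsewhere (row sum 1), and `2h - l` heavy rows
with `n' + 2` entries `+1` (row sum 3), spread over the columns by a cyclic filling so that every
column sum is `≥ 0`, and `≥ 2` where the light rows are `+1`. The total is `6h - 2l`.
-/

open Finset

open scoped Classical

/-- The weight of a vertex `v`: the sum of `f` over the edges of `G` incident to `v`. -/
noncomputable def vweight {V : Type*} [Fintype V] [DecidableEq V]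
    (G : SimpleGraph V) (f : Sym2 V → ℤ) (v : V) : ℤ :=
  ∑ e ∈ G.incidenceFinset v, f e

/-- `f` is a signed edge domination function of `G`: it takes values in `{1,-1}` on the
edges and for each edge `e = uv`, `∑_{e' ∈ N[e]} f e' = f(u) + f(v) - f(e) ≥ 1`. -/
noncomputable def IsSEDF {V : Type*} [Fintype V] [DecidableEq V]
    (G : SimpleGraph V) (f : Sym2 V → ℤ) : Prop :=
  (∀ e ∈ G.edgeFinset, f e = 1 ∨ f e = -1) ∧
  ∀ ⦃u v⦄, G.Adj u v → 1 ≤ vweight G f u + vweight G f v - f s(u, v)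

/-- `f ∈ SEDF⁰(G)`: `f` takes values in `{1,-1}` on the edges, every vertex has
nonnegative weight, and both endpoints of any positive edge have weights summing to ≥ 2. -/
noncomputable def IsSEDF0 {V : Type*} [Fintype V] [DecidableEq V]
    (G : SimpleGraph V) (f : Sym2 V → ℤ) : Prop :=
  (∀ e ∈ G.edgeFinset, f e = 1 ∨ f e = -1) ∧
  (∀ v, 0 ≤ vweight G f v) ∧
  ∀ ⦃u v⦄, G.Adj u v → f s(u, v) = 1 → 2 ≤ vweight G f u + vweight G f v

open scoped Matrix

variable {α β : Type*}

lemma exists_sym2_eq (g : Matrix α β ℤ) :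
    ∃ f : Sym2 (α ⊕ β) → ℤ, ∀ i j, f s(.inl i, .inr j) = g i j :=
  ⟨Sym2.lift ⟨Sum.elim (fun i => Sum.elim 0 (g i)) (fun j => Sum.elim (g · j) 0),
    by rintro (_ | _) (_ | _) <;> rfl⟩, fun _ _ => rfl⟩

lemma vweight_eq_sum_neighborFinset {V : Type*} [Fintype V] [DecidableEq V] (G : SimpleGraph V)
    (f : Sym2 V → ℤ) (v : V) : vweight G f v = ∑ w ∈ G.neighborFinset v, f s(v, w) := by
  have : G.incidenceFinset v = (G.neighborFinset v).image (fun w => s(v, w)) := by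
    ext e
    induction e with
    | h x y =>
      simp only [SimpleGraph.mem_incidenceFinset, Finset.mem_image, SimpleGraph.mem_neighborFinset]
      rw [SimpleGraph.mk'_mem_incidenceSet_iff]
      constructor
      · rintro ⟨hadj, rfl | rfl⟩
        exacts [⟨y, hadj, rfl⟩, ⟨x, hadj.symm, Sym2.eq_swap⟩]
      · rintro ⟨a, ha, he⟩
        rcases Sym2.eq_iff.mp he with ⟨rfl, rfl⟩ | ⟨rfl, rfl⟩
        exacts [⟨ha, .inl rfl⟩, ⟨ha.symm, .inr rfl⟩]
  rw [vweight, this, Finset.sum_image fun _ _ _ _ h => Sym2.congr_right.mp h]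

variable [Fintype α] [Fintype β]

/-- The SEDF condition on `K_{α,β}`, for the matrix `g i j = f s(inl i, inr j)` of edge values. -/
def IsSEDFMatrix (g : Matrix α β ℤ) : Prop :=
  (∀ i j, g i j = 1 ∨ g i j = -1) ∧ ∀ i j, 1 ≤ ∑ j', g i j' + ∑ i', g i' j - g i j

lemma edgeFinset_completeBipartiteGraph :
    (completeBipartiteGraph α β).edgeFinset =
      univ.image fun x : α × β => s(.inl x.1, .inr x.2) := by
  apply Finset.coe_injective
  simp [SimpleGraph.edgeSet_completeBipartiteGraph, Set.image_univ]

lemma sum_edgeFinset_completeBipartiteGraph (f : Sym2 (α ⊕ β) → ℤ) :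
    ∑ e ∈ (completeBipartiteGraph α β).edgeFinset, f e = ∑ i, ∑ j, f s(.inl i, .inr j) := by
  rw [edgeFinset_completeBipartiteGraph, Finset.sum_image, Fintype.sum_prod_type]
  rintro ⟨i, j⟩ - ⟨i', j'⟩ - h
  simpa using h

section DecidableEq

variable [DecidableEq α] [DecidableEq β]

lemma vweight_completeBipartiteGraph_inl (f : Sym2 (α ⊕ β) → ℤ) (i : α) :
    vweight (completeBipartiteGraph α β) f (.inl i) = ∑ j, f s(.inl i, .inr j) := by
  simp [vweight_eq_sum_neighborFinset, SimpleGraph.neighborFinset_eq_filter, Finset.sum_filter]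

lemma vweight_completeBipartiteGraph_inr (f : Sym2 (α ⊕ β) → ℤ) (j : β) :
    vweight (completeBipartiteGraph α β) f (.inr j) = ∑ i, f s(.inl i, .inr j) := by
  simp [vweight_eq_sum_neighborFinset, SimpleGraph.neighborFinset_eq_filter, Finset.sum_filter,
    Sym2.eq_swap]

lemma isSEDF_completeBipartiteGraph_iff (f : Sym2 (α ⊕ β) → ℤ) :
    IsSEDF (completeBipartiteGraph α β) f ↔
      IsSEDFMatrix (Matrix.of fun i j => f s(.inl i, .inr j)) := by
  simp only [IsSEDF, IsSEDFMatrix, edgeFinset_completeBipartiteGraph, Finset.mem_image,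
    Finset.mem_univ, true_and, Matrix.of_apply]
  constructor
  · rintro ⟨hpm, hcond⟩
    refine ⟨fun i j => hpm _ ⟨(i, j), rfl⟩, fun i j => ?_⟩
    simpa [vweight_completeBipartiteGraph_inl, vweight_completeBipartiteGraph_inr] using
      hcond (u := .inl i) (v := .inr j) (by simp)
  · rintro ⟨hpm, hcond⟩
    refine ⟨by rintro _ ⟨⟨i, j⟩, rfl⟩; exact hpm i j, ?_⟩
    rintro (i | j) (i' | j') hadj <;> simp at hadj
    · simpa [vweight_completeBipartiteGraph_inl, vweight_completeBipartiteGraph_inr] using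
        hcond i j'
    · simpa [vweight_completeBipartiteGraph_inl, vweight_completeBipartiteGraph_inr, Sym2.eq_swap,
        add_comm] using hcond i' j

lemma setOf_isSEDF_completeBipartiteGraph :
    {s | ∃ f, IsSEDF (completeBipartiteGraph α β) f ∧
      s = ∑ e ∈ (completeBipartiteGraph α β).edgeFinset, f e} =
    {s | ∃ g : Matrix α β ℤ, IsSEDFMatrix g ∧ s = ∑ i, ∑ j, g i j} := by
  ext s
  constructor
  · rintro ⟨f, hf, rfl⟩
    exact ⟨_, (isSEDF_completeBipartiteGraph_iff f).mp hf, sum_edgeFinset_completeBipartiteGraph f⟩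
  · rintro ⟨g, hg, rfl⟩
    obtain ⟨f, hf⟩ := exists_sym2_eq g
    have hfg : Matrix.of (fun i j => f s(.inl i, .inr j)) = g := Matrix.ext hf
    refine ⟨f, (isSEDF_completeBipartiteGraph_iff f).mpr (hfg ▸ hg), ?_⟩
    simp [sum_edgeFinset_completeBipartiteGraph, hf]

end DecidableEq

lemma even_sum_add_card {ι : Type*} {s : Finset ι} {g : ι → ℤ} (hg : ∀ x ∈ s, g x = 1 ∨ g x = -1) :
    Even (∑ x ∈ s, g x + #s) := by
  have : ∑ x ∈ s, g x + #s = ∑ x ∈ s, (g x + 1) := by simp [Finset.sum_add_distrib]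
  rw [this]
  refine Finset.even_sum _ fun x hx => ?_
  rcases hg x hx with h | h <;> simp [h]

lemma sum_ite_one_neg_one {ι : Type*} (s : Finset ι) (p : ι → Prop) [DecidablePred p] :
    ∑ x ∈ s, (if p x then (1 : ℤ) else -1) = 2 * #{x ∈ s | p x} - #s := by
  rw [Finset.sum_ite, sum_const, sum_const, ← card_filter_add_card_filter_not (s := s) p]
  simp only [nsmul_eq_mul, mul_one, mul_neg, Nat.cast_add]
  ring

namespace IsSEDFMatrix

variable {g : Matrix α β ℤ}

lemma transpose (hg : IsSEDFMatrix g) : IsSEDFMatrix gᵀ :=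
  ⟨fun j i => hg.1 i j, fun j i => by simpa [add_comm] using hg.2 i j⟩

lemma odd_sum_row (hg : IsSEDFMatrix g) (hβ : Odd (Fintype.card β)) (i : α) :
    Odd (∑ j, g i j) := by
  have := even_sum_add_card (s := univ) fun j _ => hg.1 i j
  simp only [Int.even_add, card_univ, Int.even_coe_nat] at this
  rwa [← Int.not_even_iff_odd, this, Nat.not_even_iff_odd]

lemma even_sum_col (hg : IsSEDFMatrix g) (hα : Even (Fintype.card α)) (j : β) :
    Even (∑ i, g i j) := by
  have := even_sum_add_card (s := univ) fun i _ => hg.1 i j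
  simpa [Int.even_add, hα] using this

lemma two_add_sub_le_sum_col (hg : IsSEDFMatrix g) {i : α}
    (hpar : ∀ j, Odd (∑ j', g i j' + ∑ i', g i' j)) (j : β) :
    2 + g i j - ∑ j', g i j' ≤ ∑ i', g i' j := by
  obtain ⟨t, ht⟩ := hpar j
  have := hg.2 i j
  rcases hg.1 i j with h | h <;> omega

lemma card_mul_add_le_sum (hg : IsSEDFMatrix g) {i : α}
    (hpar : ∀ j, Odd (∑ j', g i j' + ∑ i', g i' j)) :
    (Fintype.card β : ℤ) * (2 - ∑ j, g i j) + ∑ j, g i j ≤ ∑ i, ∑ j, g i j := by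
  calc (Fintype.card β : ℤ) * (2 - ∑ j, g i j) + ∑ j, g i j = ∑ j, (2 + g i j - ∑ j', g i j') := by
        simp only [Finset.sum_sub_distrib, Finset.sum_add_distrib, Finset.sum_const, card_univ,
          nsmul_eq_mul]
        ring
    _ ≤ ∑ j, ∑ i', g i' j := Finset.sum_le_sum fun j _ => hg.two_add_sub_le_sum_col hpar j
    _ = ∑ i, ∑ j, g i j := Finset.sum_comm

theorem max_le_sum (hg : IsSEDFMatrix g) (hpar : ∀ i j, Odd (∑ j', g i j' + ∑ i', g i' j))
    {i₀ : α} {j₀ : β} (hi₀ : ∑ j, g i₀ j ≤ 1) (hj₀ : ∑ i, g i j₀ = 0) :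
    max (2 * (Fintype.card α : ℤ)) (Fintype.card β + 1) ≤ ∑ i, ∑ j, g i j := by
  have hparT (j : β) (i : α) : Odd (∑ i', gᵀ j i' + ∑ j', gᵀ j' i) := by
    simpa [add_comm] using hpar i j
  have hi₀' : ∑ j, g i₀ j = 1 := by
    have := hg.transpose.two_add_sub_le_sum_col (hparT j₀) i₀
    simp only [Matrix.transpose_apply, hj₀] at this
    rcases hg.1 i₀ j₀ with h | h <;> omega
  have hrow := hg.card_mul_add_le_sum (hpar i₀)
  have hcol := hg.transpose.card_mul_add_le_sum (hparT j₀)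
  simp only [Matrix.transpose_apply, hj₀, ← Finset.sum_comm (f := fun i j => g i j)] at hcol
  rw [hi₀'] at hrow
  omega

theorem min_le_sum (hg : IsSEDFMatrix g) (hα : Even (Fintype.card α))
    (hβ : Odd (Fintype.card β)) (hαβ : Fintype.card α ≤ Fintype.card β) :
    min (3 * (Fintype.card α : ℤ)) (max (2 * Fintype.card α) (Fintype.card β + 1)) ≤
      ∑ i, ∑ j, g i j := by
  have hpar (i : α) (j : β) : Odd (∑ j', g i j' + ∑ i', g i' j) :=
    (hg.odd_sum_row hβ i).add_even (hg.even_sum_col hα j)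
  have hβ1 : (1 : ℤ) ≤ Fintype.card β := by exact_mod_cast hβ.pos
  have hαβ' : (Fintype.card α : ℤ) ≤ Fintype.card β := by exact_mod_cast hαβ
  by_cases hA : ∀ i, 3 ≤ ∑ j, g i j
  · have := Finset.card_nsmul_le_sum univ (fun i => ∑ j, g i j) 3 fun i _ => hA i
    simp only [card_univ, nsmul_eq_mul] at this
    omega
  push Not at hA
  obtain ⟨i₀, hi₀⟩ := hA
  obtain ⟨a, ha⟩ := hg.odd_sum_row hβ i₀
  have hB (j : β) : 0 ≤ ∑ i, g i j := by
    have := hg.two_add_sub_le_sum_col (hpar i₀) j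
    rcases hg.1 i₀ j with h | h <;> omega
  by_cases hB2 : ∀ j, 2 ≤ ∑ i, g i j
  · have := Finset.card_nsmul_le_sum univ (fun j => ∑ i, g i j) 2 fun j _ => hB2 j
    simp only [card_univ, nsmul_eq_mul, ← Finset.sum_comm (f := fun i j => g i j)] at this
    omega
  push Not at hB2
  obtain ⟨j₀, hj₀⟩ := hB2
  obtain ⟨b, hb⟩ := hg.even_sum_col hα j₀
  have := hB j₀
  have := hg.max_le_sum hpar (i₀ := i₀) (j₀ := j₀) (by omega) (by omega)
  omega

lemma submatrix {α' β' : Type*} [Fintype α'] [Fintype β'] (hg : IsSEDFMatrix g) (eα : α' ≃ α)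
    (eβ : β' ≃ β) : IsSEDFMatrix (g.submatrix eα eβ) :=
  ⟨fun i j => hg.1 _ _, fun i j => by
    simpa only [Matrix.submatrix_apply, eβ.sum_comp (g (eα i)), eα.sum_comp (g · (eβ j))] using
      hg.2 (eα i) (eβ j)⟩

lemma of_sum_row_sum_col (hpm : ∀ i j, g i j = 1 ∨ g i j = -1) (hA : ∀ i, 1 ≤ ∑ j, g i j)
    (hB : ∀ j, 0 ≤ ∑ i, g i j) (hpos : ∀ i j, ∑ j', g i j' = 1 → g i j = 1 → 2 ≤ ∑ i', g i' j) :
    IsSEDFMatrix g := by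
  refine ⟨hpm, fun i j => ?_⟩
  have := hA i
  have := hB j
  rcases hpm i j with h | h
  · by_cases hi : ∑ j', g i j' = 1
    · linarith [hpos i j hi h]
    · omega
  · omega

end IsSEDFMatrix

lemma exists_le_le_sum_eq {ι : Type*} (s : Finset ι) {lo hi : ι → ℕ} {S : ℕ}
    (hle : ∀ i ∈ s, lo i ≤ hi i) (hlo : ∑ i ∈ s, lo i ≤ S) (hhi : S ≤ ∑ i ∈ s, hi i) :
    ∃ x : ι → ℕ, (∀ i ∈ s, lo i ≤ x i ∧ x i ≤ hi i) ∧ ∑ i ∈ s, x i = S := by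
  induction s using Finset.induction_on generalizing S with
  | empty => exact ⟨0, by simp, by simp_all⟩
  | insert a s ha ih =>
    rw [sum_insert ha] at hlo hhi
    have hle' : ∀ i ∈ s, lo i ≤ hi i := fun i hmem => hle i (mem_insert_of_mem hmem)
    have := Finset.sum_le_sum hle'
    have := hle a (mem_insert_self a s)
    set y := min (hi a) (S - ∑ i ∈ s, lo i) with hy
    obtain ⟨x, hx, hsum⟩ := ih (S := S - y) hle' (by omega) (by omega)
    have hxa (i) (hmem : i ∈ s) : Function.update x a y i = x i :=
      Function.update_of_ne (ne_of_mem_of_not_mem hmem ha) _ _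
    refine ⟨Function.update x a y, fun i hmem => ?_, ?_⟩
    · rcases mem_insert.mp hmem with rfl | hmem
      · simp only [Function.update_self]
        omega
      · rw [hxa i hmem]
        exact hx i hmem
    · rw [sum_insert ha, Function.update_self, sum_congr rfl hxa, hsum]
      omega

lemma card_filter_eq_of_injOn {X Y : Type*} [Fintype X] {p : X → Prop} [DecidablePred p]
    {f : X → Y} {t : Finset Y} (hf : Set.InjOn f {x | p x})
    (ht : ∀ y, y ∈ t ↔ ∃ x, p x ∧ f x = y) : #{x | p x} = #t := by
  refine card_nbij f (fun x hx => (ht _).2 ⟨x, by simpa using hx, rfl⟩) (by simpa using hf) ?_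
  intro y hy
  obtain ⟨x, hx, rfl⟩ := (ht y).1 hy
  exact ⟨x, by simpa using hx, rfl⟩

/- Cyclic filling: column `j` takes `s j` consecutive slots among `0, …, c * k - 1`, and slot `q`
lies in row `q % k`. Since `s j ≤ k`, a column meets every row at most once. -/
theorem exists_rel_card_eq {k c : ℕ} (s : β → ℕ) (hs : ∀ j, s j ≤ k) (hsum : ∑ j, s j = c * k) :
    ∃ R : Fin k → β → Prop, (∀ r, #{j | R r j} = c) ∧ ∀ j, #{r | R r j} = s j := by
  let e := Fintype.equivFin β
  let slot : (Σ a, Fin (s (e.symm a))) ≃ Fin (c * k) :=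
    finSigmaFinEquiv.trans (finCongr (by rw [← hsum]; exact e.symm.sum_comp s))
  let row (x : Σ a, Fin (s (e.symm a))) : Fin k := (finProdFinEquiv.symm (slot x)).2
  let col (x : Σ a, Fin (s (e.symm a))) : β := e.symm x.1
  have hinj (x y) (hcol : col x = col y) (hrow : row x = row y) : x = y := by
    obtain ⟨a, t⟩ := x
    obtain ⟨a', t'⟩ := y
    obtain rfl : a = a' := e.symm.injective hcol
    have h : (slot ⟨a, t⟩ : ℕ) % k = slot ⟨a, t'⟩ % k := by
      simpa [row] using congrArg Fin.val hrow
    simp only [slot, Equiv.trans_apply, finCongr_apply, Fin.val_cast, finSigmaFinEquiv_apply] at h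
    have := Nat.ModEq.eq_of_lt_of_lt (Nat.ModEq.add_left_cancel' _ h)
      (t.2.trans_le (hs _)) (t'.2.trans_le (hs _))
    exact Sigma.ext rfl (heq_of_eq (Fin.ext this))
  refine ⟨fun r j => ∃ x, row x = r ∧ col x = j, fun r => ?_, fun j => ?_⟩
  · rw [← card_filter_eq_of_injOn (p := fun x => row x = r) (f := col)
      (fun x hx y hy h => hinj x y h (hx.trans hy.symm)) (by simp)]
    calc #{x | row x = r} = #{w : Fin c × Fin k | w.2 = r} :=
          card_equiv (slot.trans finProdFinEquiv.symm) (by simp [row])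
      _ = c := by rw [Finset.card_filter, Fintype.sum_prod_type]; simp
  · rw [← card_filter_eq_of_injOn (p := fun x => col x = j) (f := row)
      (fun x hx y hy h => hinj x y (hx.trans hy.symm) h) (by simp [and_comm])]
    simp only [col, Equiv.symm_apply_eq]
    rw [Finset.card_filter, Fintype.sum_sigma]
    simp [apply_ite]

theorem exists_rel_card_eq_of_le {k c : ℕ} (lo : β → ℕ) (hlo : ∀ j, lo j ≤ k)
    (hsum : ∑ j, lo j ≤ c * k) (hc : c ≤ Fintype.card β) :
    ∃ R : Fin k → β → Prop, (∀ r, #{j | R r j} = c) ∧ ∀ j, lo j ≤ #{r | R r j} := by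
  obtain ⟨s, hs, hsum'⟩ := exists_le_le_sum_eq univ (hi := fun _ => k) (fun j _ => hlo j) hsum
    (by simpa using Nat.mul_le_mul_right k hc)
  obtain ⟨R, hrow, hcol⟩ := exists_rel_card_eq s (fun j => (hs j (mem_univ j)).2) hsum'
  exact ⟨R, hrow, fun j => (hcol j).symm ▸ (hs j (mem_univ j)).1⟩

theorem exists_heavy_rows {h n l : ℕ} (hl : l ≤ h) (hn : 0 < n)
    (hl3 : 0 < l → l + n + 1 ≤ 3 * h) :
    ∃ R : Fin (2 * h - l) → Fin (n + 1) ⊕ Fin n → Prop, (∀ r, #{j | R r j} = n + 2) ∧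
      (∀ j, (if l = 0 then h else h + 1 - l) ≤ #{r | R r (.inl j)}) ∧
      ∀ j, h ≤ #{r | R r (.inr j)} := by
  obtain ⟨R, hrow, hcol⟩ := exists_rel_card_eq_of_le (k := 2 * h - l) (c := n + 2)
    (Sum.elim (fun _ : Fin (n + 1) => if l = 0 then h else h + 1 - l) fun _ : Fin n => h)
    (by
      rintro (j | j)
      · simp only [Sum.elim_inl]
        split_ifs <;> omega
      · simp only [Sum.elim_inr]
        omega)
    (by
      simp only [Fintype.sum_sum_type, Sum.elim_inl, Sum.elim_inr, sum_const, card_univ,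
        Fintype.card_fin, smul_eq_mul]
      split_ifs with hl0
      · subst hl0
        rw [Nat.sub_zero]
        nlinarith
      · zify [hl, (by omega : l ≤ h + 1), (by omega : l ≤ 2 * h)]
        nlinarith [hl3 (by omega)])
    (by simp; omega)
  exact ⟨R, hrow, fun j => hcol (.inl j), fun j => hcol (.inr j)⟩

theorem exists_isSEDFMatrix_sum_eq {h n l : ℕ} (hl : l ≤ h) (hn : 0 < n)
    (hl3 : 0 < l → l + n + 1 ≤ 3 * h) :
    ∃ g : Matrix (Fin l ⊕ Fin (2 * h - l)) (Fin (n + 1) ⊕ Fin n) ℤ,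
      IsSEDFMatrix g ∧ ∑ i, ∑ j, g i j = 6 * h - 2 * l := by
  obtain ⟨R, hrow, hleft, hright⟩ := exists_heavy_rows hl hn hl3
  let g : Matrix (Fin l ⊕ Fin (2 * h - l)) (Fin (n + 1) ⊕ Fin n) ℤ :=
    Matrix.fromRows (Matrix.fromCols (Matrix.of fun _ _ => 1) (Matrix.of fun _ _ => -1))
      (Matrix.of fun r j => if R r j then 1 else -1)
  have hA : ∀ i, ∑ j, g i j = Sum.elim (fun _ => 1) (fun _ => 3) i := by
    rintro (i | r)
    · simp [g, Fintype.sum_sum_type]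
    · simp [g, sum_ite_one_neg_one, hrow]
      ring
  have hB : ∀ j, ∑ i, g i j =
      Sum.elim (fun _ => (l : ℤ)) (fun _ => -l) j + (2 * #{r | R r j} - (2 * h - l : ℕ)) := by
    rintro (j | j) <;> simp [g, Fintype.sum_sum_type, sum_ite_one_neg_one]
  have hBl (j : Fin (n + 1)) : 0 ≤ ∑ i, g i (.inl j) ∧ (0 < l → 2 ≤ ∑ i, g i (.inl j)) := by
    have := hleft j
    rw [hB]
    simp only [Sum.elim_inl]
    split_ifs at this <;> omega
  have hBr (j : Fin n) : 0 ≤ ∑ i, g i (.inr j) := by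
    have := hright j
    rw [hB]
    simp only [Sum.elim_inr]
    omega
  refine ⟨g, .of_sum_row_sum_col ?_ ?_ ?_ ?_, ?_⟩
  · rintro (i | r) (j | j) <;> simp [g, em]
  · rintro (i | r) <;> simp [hA]
  · rintro (j | j)
    exacts [(hBl j).1, hBr j]
  · rintro (i | r) (j | j) hi hij
    · exact (hBl j).2 i.pos
    · simp [g] at hij
    · simp [hA] at hi
    · simp [hA] at hi
  · simp [hA, Fintype.sum_sum_type]
    omega

theorem isLeast_sum_isSEDFMatrix (hα0 : 0 < Fintype.card α) (hα : Even (Fintype.card α))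
    (hβ : Odd (Fintype.card β)) (hαβ : Fintype.card α ≤ Fintype.card β) :
    IsLeast {s | ∃ g : Matrix α β ℤ, IsSEDFMatrix g ∧ s = ∑ i, ∑ j, g i j}
      (min (3 * (Fintype.card α : ℤ)) (max (2 * Fintype.card α) (Fintype.card β + 1))) := by
  refine ⟨?_, fun s ⟨g, hg, hs⟩ => hs ▸ hg.min_le_sum hα hβ hαβ⟩
  obtain ⟨h, hh⟩ := hα
  obtain ⟨n, hn⟩ := hβ
  obtain ⟨g, hg, hsum⟩ := exists_isSEDFMatrix_sum_eq (h := h) (n := n)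
    (l := min h (3 * h - (n + 1))) (min_le_left _ _) (by omega) (by omega)
  let eα : α ≃ Fin (min h (3 * h - (n + 1))) ⊕ Fin (2 * h - min h (3 * h - (n + 1))) :=
    Fintype.equivOfCardEq (by simp; omega)
  let eβ : β ≃ Fin (n + 1) ⊕ Fin n := Fintype.equivOfCardEq (by simp; omega)
  refine ⟨g.submatrix eα eβ, hg.submatrix eα eβ, ?_⟩
  simp only [Matrix.submatrix_apply, Equiv.sum_comp]
  rw [eα.sum_comp (fun i => ∑ j, g i j), hsum, hh, hn]
  push_cast
  omega

/-- for positive integers `m ≤ n` with `m` even and `n` odd,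
`γ'ₛ(K_{m,n}) = min {3m, max {2m, n+1}}`. -/
theorem stmt11 (m n : ℕ) (hm0 : 0 < m) (hmn : m ≤ n) (hm : Even m) (hn : Odd n) :
    IsLeast
      {s : ℤ | ∃ f : Sym2 (Fin m ⊕ Fin n) → ℤ,
        IsSEDF (completeBipartiteGraph (Fin m) (Fin n)) f ∧
          s = ∑ e ∈ (completeBipartiteGraph (Fin m) (Fin n)).edgeFinset, f e}
      (min (3 * (m : ℤ)) (max (2 * (m : ℤ)) ((n : ℤ) + 1))) := by
  rw [setOf_isSEDF_completeBipartiteGraph]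
  simpa using isLeast_sum_isSEDFMatrix (α := Fin m) (β := Fin n) (by simpa) (by simpa) (by simpa)
    (by simpa)
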